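/- Let f : [0,1] → ℝ be twice continuously differentiable and let F be an antiderivative of f. Then for x ∈ [0,1], the Bernstein approximation B_m(x) := m ∑_{k=0}^{m-1} (F((k+1)/m) − F(k/m)) p_k(m-1,x) satisfies sup_{x∈[0,1]} |B_m(x) − f(x)| ≤ ‖f'‖_∞/(2m) + ‖f''‖_∞/(8m) + C/m for some constant C depending only on f, where ‖·‖_∞ denotes the supremum norm on [0,1]. -/

import Mathlib

def bern (m k : ℕ) (x : ℝ) : ℝ := (m.choose k : ℝ) * x ^ k * (1 - x) ^ (m - k)

/-!
`m (F((k+1)/m) - F(k/m))` is the mean of `f` over the `k`-th cell of the grid of mesh `1/m`.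
Expanding `f` to first order at `x`, the constant term reproduces `f x` because the Bernstein
weights sum to one, and the linear term contributes `f' x (1 - 2x)/(2m)` by the first moment
identity. On a cell the remainder is at most `‖f''‖ (y - x)²`, so after weighting it is controlled
by the second moment `∑ₖ (k/m - x)² p_k(m-1, x) ≤ 1/m`.
-/

open Set

namespace bern

lemma eval_bernsteinPolynomial (n k : ℕ) (x : ℝ) :
    (bernsteinPolynomial ℝ n k).eval x = bern n k x := by
  simp [bernsteinPolynomial, bern]

lemma nonneg {n k : ℕ} {x : ℝ} (hx : x ∈ Icc (0 : ℝ) 1) : 0 ≤ bern n k x := by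
  have : 0 ≤ 1 - x := sub_nonneg.2 hx.2
  have := hx.1
  unfold bern
  positivity

lemma sum_eq_one (n : ℕ) (x : ℝ) : ∑ k ∈ Finset.range (n + 1), bern n k x = 1 := by
  simpa [Polynomial.eval_finsetSum, eval_bernsteinPolynomial] using
    congrArg (Polynomial.eval x) (bernsteinPolynomial.sum ℝ n)

lemma sum_mul (n : ℕ) (x : ℝ) :
    ∑ k ∈ Finset.range (n + 1), (k : ℝ) * bern n k x = n * x := by
  simpa [Polynomial.eval_finsetSum, eval_bernsteinPolynomial] using
    congrArg (Polynomial.eval x) (bernsteinPolynomial.sum_smul ℝ n)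

lemma sum_mul_sub_one_mul (n : ℕ) (x : ℝ) :
    ∑ k ∈ Finset.range (n + 1), (k : ℝ) * (k - 1) * bern n k x = n * (n - 1) * x ^ 2 := by
  have h := congrArg (Polynomial.eval x) (bernsteinPolynomial.sum_mul_smul ℝ n)
  have cast_mul_pred (ν : ℕ) : (ν : ℝ) * ((ν - 1 : ℕ) : ℝ) = ν * ((ν : ℝ) - 1) := by
    cases ν <;> simp
  simpa [Polynomial.eval_finsetSum, eval_bernsteinPolynomial, cast_mul_pred] using h

lemma sum_midpoint_sub_mul (n : ℕ) (x : ℝ) :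
    ∑ k ∈ Finset.range (n + 1), ((2 * k + 1) / (2 * (n + 1)) - x) * bern n k x
      = (1 - 2 * x) / (2 * (n + 1)) := by
  have hM : (n : ℝ) + 1 ≠ 0 := by positivity
  have hterm (k : ℕ) : ((2 * k + 1) / (2 * (n + 1)) - x) * bern n k x
      = 1 / (n + 1) * ((k : ℝ) * bern n k x) + (1 / (2 * (n + 1)) - x) * bern n k x := by
    field_simp; ring
  simp only [hterm, Finset.sum_add_distrib, ← Finset.mul_sum, sum_mul, sum_eq_one]
  field_simp
  ring

lemma sum_sq_grid_sub_mul_le (n : ℕ) {x : ℝ} (hx : x ∈ Icc (0 : ℝ) 1) :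
    ∑ k ∈ Finset.range (n + 1), ((k : ℝ) / (n + 1) - x) ^ 2 * bern n k x ≤ 1 / ((n : ℝ) + 1) := by
  have hM : (0 : ℝ) < n + 1 := by positivity
  have hterm (k : ℕ) : ((k : ℝ) / (n + 1) - x) ^ 2 * bern n k x
      = (1 : ℝ) / (n + 1) ^ 2 * ((k : ℝ) * (k - 1) * bern n k x)
        + ((1 : ℝ) / (n + 1) ^ 2 - 2 * x / (n + 1)) * ((k : ℝ) * bern n k x)
        + x ^ 2 * bern n k x := by
    field_simp; ring
  have hvalue : (1 : ℝ) / (n + 1) ^ 2 * (n * (n - 1) * x ^ 2)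
      + ((1 : ℝ) / (n + 1) ^ 2 - 2 * x / (n + 1)) * (n * x) + x ^ 2 * 1
      = (n * x * (1 - x) + x ^ 2) / (n + 1) ^ 2 := by
    field_simp; ring
  simp only [hterm, Finset.sum_add_distrib, ← Finset.mul_sum, sum_mul_sub_one_mul, sum_mul,
    sum_eq_one, hvalue]
  rw [div_le_div_iff₀ (by positivity) hM]
  have hnum : n * x * (1 - x) + x ^ 2 ≤ n + 1 := by
    obtain ⟨h₀, h₁⟩ := hx
    nlinarith [mul_nonneg (Nat.cast_nonneg (α := ℝ) n) (mul_nonneg h₀ h₀)]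
  nlinarith [mul_le_mul_of_nonneg_right hnum hM.le]

end bern

/-- `F b - F a` minus the integral over `[a, b]` of the first-order Taylor polynomial of `f = F'`
at `x`. -/
noncomputable def antiderivRemainder (F f f' : ℝ → ℝ) (x a b : ℝ) : ℝ :=
  F b - F a - f x * (b - a) - f' x * ((b - x) ^ 2 - (a - x) ^ 2) / 2

section Taylor

variable {F f f' f'' : ℝ → ℝ} {s : Set ℝ} {C : ℝ}

lemma abs_sub_sub_deriv_mul_le (hs : Convex ℝ s)
    (hf : ∀ y ∈ s, HasDerivWithinAt f (f' y) s y)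
    (hf' : ∀ y ∈ s, HasDerivWithinAt f' (f'' y) s y)
    (hC : ∀ y ∈ s, |f'' y| ≤ C) {x t : ℝ} (hx : x ∈ s) (ht : t ∈ s) :
    |f t - f x - f' x * (t - x)| ≤ C * (t - x) ^ 2 := by
  have hC0 : 0 ≤ C := (abs_nonneg _).trans (hC x hx)
  have hxt : uIcc x t ⊆ s := (convex_iff_ordConnected.1 hs).uIcc_subset hx ht
  have hlip (u : ℝ) (hu : u ∈ uIcc x t) : ‖f' u - f' x‖ ≤ C * |t - x| :=
    calc ‖f' u - f' x‖ ≤ C * ‖u - x‖ :=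
          hs.norm_image_sub_le_of_norm_hasDerivWithin_le hf' hC hx (hxt hu)
      _ ≤ C * |t - x| := mul_le_mul_of_nonneg_left (abs_sub_left_of_mem_uIcc hu) hC0
  have hderiv (u : ℝ) (hu : u ∈ uIcc x t) : HasDerivWithinAt (fun u ↦ f u - f x - f' x * (u - x))
      (f' u - f' x) (uIcc x t) u :=
    ((((hf u (hxt hu)).mono hxt).sub_const (f x)).sub
      (((hasDerivWithinAt_id u _).sub_const x).const_mul (f' x))).congr_deriv (by ring)
  have := (convex_uIcc x t).norm_image_sub_le_of_norm_hasDerivWithin_le hderiv hlip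
    left_mem_uIcc right_mem_uIcc
  simp only [sub_self, mul_zero, sub_zero, Real.norm_eq_abs] at this
  rwa [mul_assoc, abs_mul_abs_self, ← sq] at this

lemma abs_antideriv_sub_taylor_le (hs : Convex ℝ s)
    (hF : ∀ y ∈ s, HasDerivWithinAt F (f y) s y)
    (hf : ∀ y ∈ s, HasDerivWithinAt f (f' y) s y)
    (hf' : ∀ y ∈ s, HasDerivWithinAt f' (f'' y) s y)
    (hC : ∀ y ∈ s, |f'' y| ≤ C) {x a b D : ℝ} (hx : x ∈ s) (ha : a ∈ s) (hb : b ∈ s)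
    (hab : a ≤ b) (hD : ∀ y ∈ Icc a b, (y - x) ^ 2 ≤ D) :
    |antiderivRemainder F f f' x a b| ≤ C * D * (b - a) := by
  have hC0 : 0 ≤ C := (abs_nonneg _).trans (hC x hx)
  have hab_s : Icc a b ⊆ s := (convex_iff_ordConnected.1 hs).out ha hb
  have hderiv (y : ℝ) (hy : y ∈ Icc a b) :
      HasDerivWithinAt (fun t ↦ F t - f x * t - f' x * (t - x) ^ 2 / 2)
        (f y - f x - f' x * (y - x)) (Icc a b) y :=
    ((((hF y (hab_s hy)).mono hab_s).sub ((hasDerivWithinAt_id y _).const_mul (f x))).sub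
      (((((hasDerivWithinAt_id y _).sub_const x).pow 2).const_mul (f' x)).div_const 2)).congr_deriv
      (by simp; ring)
  have hbound (y : ℝ) (hy : y ∈ Icc a b) : ‖f y - f x - f' x * (y - x)‖ ≤ C * D :=
    (abs_sub_sub_deriv_mul_le hs hf hf' hC hx (hab_s hy)).trans
      (mul_le_mul_of_nonneg_left (hD y hy) hC0)
  have := (convex_Icc a b).norm_image_sub_le_of_norm_hasDerivWithin_le hderiv hbound
    (left_mem_Icc.2 hab) (right_mem_Icc.2 hab)
  rw [Real.norm_eq_abs, Real.norm_eq_abs, abs_of_nonneg (sub_nonneg.2 hab)] at this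
  convert this using 2
  unfold antiderivRemainder
  ring

end Taylor

lemma sq_sub_le_of_mem_Icc {a h x y : ℝ} (hy : y ∈ Icc a (a + h)) :
    (y - x) ^ 2 ≤ 2 * ((a - x) ^ 2 + h ^ 2) := by
  obtain ⟨h₁, h₂⟩ := hy
  nlinarith [sq_nonneg (y - a - (a - x))]

noncomputable def bernsteinApprox (F : ℝ → ℝ) (m : ℕ) (x : ℝ) : ℝ :=
  m * ∑ k ∈ Finset.range m, (F ((k + 1) / m) - F (k / m)) * bern (m - 1) k x

section Approx

variable {F f f' f'' : ℝ → ℝ} {B₁ B₂ : ℝ}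

lemma grid_mem_Icc {n k : ℕ} (hk : k ≤ n) :
    (k : ℝ) / (n + 1) ∈ Icc (0 : ℝ) 1 ∧ ((k : ℝ) + 1) / (n + 1) ∈ Icc (0 : ℝ) 1 := by
  have hk' : (k : ℝ) + 1 ≤ n + 1 := by exact_mod_cast Nat.succ_le_succ hk
  have hM : (0 : ℝ) < n + 1 := by positivity
  refine ⟨⟨by positivity, ?_⟩, ⟨by positivity, ?_⟩⟩ <;> rw [div_le_one hM] <;> linarith

lemma bernsteinApprox_sub_eq (F f f' : ℝ → ℝ) (n : ℕ) (x : ℝ) :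
    bernsteinApprox F (n + 1) x - f x
      = f' x * ∑ k ∈ Finset.range (n + 1), ((2 * k + 1) / (2 * (n + 1)) - x) * bern n k x
        + ∑ k ∈ Finset.range (n + 1),
            (n + 1) * antiderivRemainder F f f' x (k / (n + 1)) ((k + 1) / (n + 1)) * bern n k x := by
  have hM : (n : ℝ) + 1 ≠ 0 := by positivity
  conv_lhs => rw [← mul_one (f x), ← bern.sum_eq_one n x]
  simp only [bernsteinApprox, antiderivRemainder, Nat.cast_add, Nat.cast_one, Nat.add_sub_cancel,
    Finset.mul_sum, ← Finset.sum_sub_distrib, ← Finset.sum_add_distrib]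
  refine Finset.sum_congr rfl fun k _ ↦ ?_
  field_simp
  ring

lemma abs_bernsteinApprox_sub_le
    (hF : ∀ y ∈ Icc (0 : ℝ) 1, HasDerivWithinAt F (f y) (Icc 0 1) y)
    (hf : ∀ y ∈ Icc (0 : ℝ) 1, HasDerivWithinAt f (f' y) (Icc 0 1) y)
    (hf' : ∀ y ∈ Icc (0 : ℝ) 1, HasDerivWithinAt f' (f'' y) (Icc 0 1) y)
    (hB₁ : ∀ y ∈ Icc (0 : ℝ) 1, |f' y| ≤ B₁) (hB₂ : ∀ y ∈ Icc (0 : ℝ) 1, |f'' y| ≤ B₂)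
    (n : ℕ) {x : ℝ} (hx : x ∈ Icc (0 : ℝ) 1) :
    |bernsteinApprox F (n + 1) x - f x| ≤ (B₁ / 2 + 4 * B₂) / (n + 1) := by
  set M : ℝ := n + 1
  have hM : 0 < M := by positivity
  have hB₂0 : 0 ≤ B₂ := (abs_nonneg _).trans (hB₂ x hx)
  have hlinear : |f' x * ∑ k ∈ Finset.range (n + 1), ((2 * k + 1) / (2 * M) - x) * bern n k x|
      ≤ B₁ / 2 / M := by
    rw [bern.sum_midpoint_sub_mul, abs_mul, abs_div, abs_of_pos (by positivity : 0 < 2 * M)]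
    have h12x : |1 - 2 * x| ≤ 1 := abs_le.2 ⟨by linarith [hx.2], by linarith [hx.1]⟩
    calc |f' x| * (|1 - 2 * x| / (2 * M)) ≤ B₁ * (1 / (2 * M)) := by
          gcongr
          exacts [(abs_nonneg _).trans (hB₁ x hx), hB₁ x hx]
      _ = B₁ / 2 / M := by field_simp
  have hcell (k : ℕ) (hk : k ∈ Finset.range (n + 1)) :
      |M * antiderivRemainder F f f' x (k / M) ((k + 1) / M)|
        ≤ 2 * B₂ * (((k : ℝ) / M - x) ^ 2 + 1 / M ^ 2) := by
    obtain ⟨ha, hb⟩ := grid_mem_Icc (Nat.lt_succ_iff.1 (Finset.mem_range.1 hk))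
    have hstep : ((k : ℝ) + 1) / M = k / M + 1 / M := by field_simp
    have := abs_antideriv_sub_taylor_le (convex_Icc 0 1) hF hf hf' hB₂ hx ha hb
      (by rw [hstep]; linarith [one_div_pos.2 hM])
      (fun y hy ↦ sq_sub_le_of_mem_Icc (hstep ▸ hy))
    rw [hstep, add_sub_cancel_left] at this
    rw [abs_mul, abs_of_pos hM, hstep]
    calc M * |antiderivRemainder F f f' x (k / M) (k / M + 1 / M)|
        ≤ M * (B₂ * (2 * (((k : ℝ) / M - x) ^ 2 + (1 / M) ^ 2)) * (1 / M)) := by gcongr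
      _ = 2 * B₂ * (((k : ℝ) / M - x) ^ 2 + 1 / M ^ 2) := by field_simp
  have hremainder : |∑ k ∈ Finset.range (n + 1),
      M * antiderivRemainder F f f' x (k / M) ((k + 1) / M) * bern n k x| ≤ 4 * B₂ / M := by
    calc _ ≤ ∑ k ∈ Finset.range (n + 1),
          2 * B₂ * (((k : ℝ) / M - x) ^ 2 * bern n k x + 1 / M ^ 2 * bern n k x) := by
          refine (Finset.abs_sum_le_sum_abs _ _).trans (Finset.sum_le_sum fun k hk ↦ ?_)
          rw [abs_mul, abs_of_nonneg (bern.nonneg hx), ← add_mul, ← mul_assoc]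
          exact mul_le_mul_of_nonneg_right (hcell k hk) (bern.nonneg hx)
      _ ≤ 2 * B₂ * (1 / M + 1 / M ^ 2) := by
          rw [← Finset.mul_sum, Finset.sum_add_distrib, ← Finset.mul_sum, bern.sum_eq_one,
            mul_one]
          gcongr
          exact bern.sum_sq_grid_sub_mul_le n hx
      _ ≤ 2 * B₂ * (1 / M + 1 / M) := by
          gcongr
          have hM1 : 1 ≤ M := le_add_of_nonneg_left n.cast_nonneg
          nlinarith
      _ = 4 * B₂ / M := by ring
  rw [bernsteinApprox_sub_eq, add_div]
  exact (abs_add_le _ _).trans (add_le_add hlinear hremainder)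

end Approx

theorem bernstein_density_bias_bound (f f' f'' F : ℝ → ℝ)
    (hf' : ∀ x ∈ Set.Icc (0:ℝ) 1, HasDerivAt f (f' x) x)
    (hf'' : ∀ x ∈ Set.Icc (0:ℝ) 1, HasDerivAt f' (f'' x) x)
    (hcont : ContinuousOn f'' (Set.Icc 0 1))
    (hF : ∀ x ∈ Set.Icc (0:ℝ) 1, HasDerivAt F (f x) x) :
    ∃ C : ℝ, ∀ m : ℕ, 1 ≤ m → ∀ x ∈ Set.Icc (0:ℝ) 1,
      |(m : ℝ) * ∑ k ∈ Finset.range m,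
          (F (((k : ℝ) + 1) / m) - F ((k : ℝ) / m)) * bern (m - 1) k x - f x|
        ≤ (⨆ y : Set.Icc (0:ℝ) 1, |f' y|) / (2 * m)
          + (⨆ y : Set.Icc (0:ℝ) 1, |f'' y|) / (8 * m) + C / m := by
  obtain ⟨B₁, hB₁⟩ := isCompact_Icc.exists_bound_of_continuousOn
    fun y hy ↦ (hf'' y hy).continuousAt.continuousWithinAt
  obtain ⟨B₂, hB₂⟩ := isCompact_Icc.exists_bound_of_continuousOn hcont
  refine ⟨B₁ / 2 + 4 * B₂, fun m hm x hx ↦ ?_⟩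
  obtain ⟨n, rfl⟩ := Nat.exists_eq_add_of_le' hm
  have hbound := abs_bernsteinApprox_sub_le (fun y hy ↦ (hF y hy).hasDerivWithinAt)
    (fun y hy ↦ (hf' y hy).hasDerivWithinAt) (fun y hy ↦ (hf'' y hy).hasDerivWithinAt)
    hB₁ hB₂ n hx
  rw [← Nat.cast_succ] at hbound
  have hsup₁ : 0 ≤ (⨆ y : Icc (0:ℝ) 1, |f' y|) / (2 * ((n + 1 : ℕ) : ℝ)) :=
    div_nonneg (Real.iSup_nonneg fun _ ↦ abs_nonneg _) (by positivity)
  have hsup₂ : 0 ≤ (⨆ y : Icc (0:ℝ) 1, |f'' y|) / (8 * ((n + 1 : ℕ) : ℝ)) :=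
    div_nonneg (Real.iSup_nonneg fun _ ↦ abs_nonneg _) (by positivity)
  show |bernsteinApprox F (n + 1) x - f x| ≤ _
  exact hbound.trans (by linarith)
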